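/- Let Z be a standard complex Gaussian, \sigma_n = \sqrt{n(n+1)/3}, and N = 2\lfloor n^{2-\epsilon}/2 \rfloor for a fixed \epsilon \in (0, 1/10). Then as n \to \infty, for any interval [a,b] \subset \mathbb{R}, \int_{\mathbb{C}} e^{-|w|^2} P(|Re(Z)| \leq \pi \sigma_n |w| / N) \cdot P(Im(Z) \in [a/n, b/n]) dm(w)/\pi = \sqrt{\pi/3} \cdot (b-a)/N + o(1/N). -/

import Mathlib

/-!
Multiplied by `N`, the integrand becomes
`e^{-|w|²} (πσₙ/n) [P(|Re Z| ≤ |w| s) / s] [n P(Im Z ∈ [a/n, b/n])] / π` with `s = πσₙ/N`, and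
`s → 0⁺` because `N/n → ∞`. Both brackets are difference quotients at `0` of the distribution
function of `N(0, 1/2)`, so they tend to `2|w|/√π` and `(b - a)/√π`, and the bound `1/√π` on the
density dominates them uniformly. Dominated convergence together with
`∫ e^{-|w|²} |w| dm = π^{3/2}/2` and `σₙ/n → 1/√3` gives `N · ∫ … → √(π/3) (b - a)`.
-/

open MeasureTheory ProbabilityTheory Real Filter Asymptotics Set Topology
open scoped NNReal

namespace ProbabilityTheory

variable {μ : ℝ} {v : ℝ≥0} {c d : ℝ}

lemma continuous_gaussianPDFReal (μ : ℝ) (v : ℝ≥0) : Continuous (gaussianPDFReal μ v) := by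
  rw [gaussianPDFReal_def]
  fun_prop

lemma gaussianPDFReal_le_gaussianPDFReal_mean (μ : ℝ) (v : ℝ≥0) (x : ℝ) :
    gaussianPDFReal μ v x ≤ gaussianPDFReal μ v μ := by
  rw [gaussianPDFReal, gaussianPDFReal, sub_self]
  refine mul_le_mul_of_nonneg_left (exp_le_exp.2 ?_) (by positivity)
  rw [zero_pow two_ne_zero, neg_zero, zero_div, neg_div, neg_nonpos]
  positivity

lemma gaussianReal_Icc_toReal (hv : v ≠ 0) (h : c ≤ d) :
    (gaussianReal μ v (Icc c d)).toReal = ∫ x in c..d, gaussianPDFReal μ v x := by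
  rw [gaussianReal_apply_eq_integral μ hv, ENNReal.toReal_ofReal
    (integral_nonneg (gaussianPDFReal_nonneg μ v)), intervalIntegral.integral_of_le h,
    integral_Icc_eq_integral_Ioc]

lemma gaussianReal_Icc_toReal_le (hv : v ≠ 0) (h : c ≤ d) :
    (gaussianReal μ v (Icc c d)).toReal ≤ (d - c) * gaussianPDFReal μ v μ := by
  rw [gaussianReal_Icc_toReal hv h]
  simpa using intervalIntegral.integral_mono_on h
    ((continuous_gaussianPDFReal μ v).intervalIntegrable c d)
    (intervalIntegrable_const (μ := volume))
    fun x _ ↦ gaussianPDFReal_le_gaussianPDFReal_mean μ v x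

lemma gaussianReal_Icc_mul_toReal_div_le (hv : v ≠ 0) (h : c ≤ d) {s : ℝ} (hs : 0 < s) :
    (gaussianReal μ v (Icc (c * s) (d * s))).toReal / s ≤ (d - c) * gaussianPDFReal μ v μ := by
  rw [div_le_iff₀ hs]
  refine (gaussianReal_Icc_toReal_le hv (mul_le_mul_of_nonneg_right h hs.le)).trans_eq ?_
  ring

lemma tendsto_gaussianReal_Icc_mul_div (hv : v ≠ 0) (h : c ≤ d) :
    Tendsto (fun s ↦ (gaussianReal μ v (Icc (c * s) (d * s))).toReal / s) (𝓝[>] 0)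
      (𝓝 ((d - c) * gaussianPDFReal μ v 0)) := by
  set F := fun u ↦ ∫ x in (0 : ℝ)..u, gaussianPDFReal μ v x
  have hF (y : ℝ) : HasDerivAt F (gaussianPDFReal μ v y) y :=
    ((continuous_gaussianPDFReal μ v).integral_hasStrictDerivAt 0 y).hasDerivAt
  have hG : HasDerivAt (fun s ↦ F (d * s) - F (c * s))
      (gaussianPDFReal μ v 0 * d - gaussianPDFReal μ v 0 * c) 0 := by
    have hd := (hF (d * 0)).comp 0 ((hasDerivAt_id 0).const_mul d)
    have hc := (hF (c * 0)).comp 0 ((hasDerivAt_id 0).const_mul c)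
    have hdc := hd.sub hc
    simp only [mul_zero, mul_one] at hdc
    exact hdc
  rw [show (d - c) * gaussianPDFReal μ v 0
    = gaussianPDFReal μ v 0 * d - gaussianPDFReal μ v 0 * c by ring]
  refine hG.tendsto_slope_zero_right.congr' ?_
  filter_upwards [self_mem_nhdsWithin] with s (hs : 0 < s)
  have hcd : c * s ≤ d * s := mul_le_mul_of_nonneg_right h hs.le
  simp only [F, zero_add, mul_zero, sub_self, smul_eq_mul, intervalIntegral.integral_same]
  rw [intervalIntegral.integral_interval_sub_left
    ((continuous_gaussianPDFReal μ v).intervalIntegrable _ _)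
    ((continuous_gaussianPDFReal μ v).intervalIntegrable _ _),
    gaussianReal_Icc_toReal hv hcd, sub_zero, inv_mul_eq_div]

lemma gaussianPDFReal_zero_half_zero : gaussianPDFReal 0 (1 / 2) 0 = (√π)⁻¹ := by
  norm_num [gaussianPDFReal]
  field_simp

end ProbabilityTheory

lemma integral_exp_neg_norm_sq_mul_norm :
    ∫ w : ℂ, exp (-‖w‖ ^ 2) * ‖w‖ = π * √π / 2 := by
  have h := Complex.integral_rpow_mul_exp_neg_rpow (p := 2) (q := 1) one_le_two (by norm_num)
  simp only [rpow_one, rpow_two] at h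
  simp_rw [mul_comm (exp _)]
  rw [h, show ((1 : ℝ) + 2) / 2 = 1 / 2 + 1 by norm_num, Gamma_add_one (by norm_num),
    Gamma_one_half_eq]
  ring

lemma integrable_exp_neg_norm_sq_mul_norm :
    Integrable (fun w : ℂ ↦ exp (-‖w‖ ^ 2) * ‖w‖) :=
  Integrable.of_integral_ne_zero (by rw [integral_exp_neg_norm_sq_mul_norm]; positivity)

lemma isLittleO_sub_div_of_tendsto_mul {α : Type*} {l : Filter α} {f N : α → ℝ} {L : ℝ}
    (hN : ∀ᶠ x in l, N x ≠ 0) (h : Tendsto (fun x ↦ N x * f x) l (𝓝 L)) :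
    (fun x ↦ f x - L / N x) =o[l] fun x ↦ 1 / N x := by
  refine (isLittleO_iff_tendsto' ?_).2 ?_
  · filter_upwards [hN] with x hx h0
    simp [hx] at h0
  · rw [← sub_self L]
    refine (h.sub_const L).congr' ?_
    filter_upwards [hN] with x hx
    field_simp

lemma tendsto_two_mul_floor_rpow_div_atTop {ε : ℝ} (hε : ε < 1) :
    Tendsto (fun n : ℕ ↦ 2 * (⌊(n : ℝ) ^ ((2 : ℝ) - ε) / 2⌋ : ℝ) / n) atTop atTop := by
  have hpow : Tendsto (fun n : ℕ ↦ (n : ℝ) ^ (1 - ε) + -2) atTop atTop :=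
    tendsto_atTop_add_const_right _ _
      ((tendsto_rpow_atTop (by linarith)).comp tendsto_natCast_atTop_atTop)
  refine tendsto_atTop_mono' _ ?_ hpow
  filter_upwards [eventually_ge_atTop 1] with n hn
  have hn : (1 : ℝ) ≤ n := by exact_mod_cast hn
  have hfloor := Int.sub_one_lt_floor ((n : ℝ) ^ ((2 : ℝ) - ε) / 2)
  rw [show (2 : ℝ) - ε = 1 - ε + 1 by ring, rpow_add_one (by positivity)] at hfloor ⊢
  rw [le_div_iff₀ (by positivity)]
  nlinarith [rpow_nonneg n.cast_nonneg (1 - ε)]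

lemma tendsto_sqrt_mul_succ_div_three_div :
    Tendsto (fun n : ℕ ↦ √((n : ℝ) * ((n : ℝ) + 1) / 3) / n) atTop (𝓝 (√3)⁻¹) := by
  have h : Tendsto (fun n : ℕ ↦ √((1 + 1 / (n : ℝ)) / 3)) atTop (𝓝 √((1 + 0) / 3)) :=
    ((tendsto_const_nhds.add tendsto_one_div_atTop_nhds_zero_nat).div_const 3).sqrt
  rw [add_zero, one_div, sqrt_inv] at h
  refine h.congr' ?_
  filter_upwards [eventually_ge_atTop 1] with n hn
  have hn : (0 : ℝ) < n := by exact_mod_cast hn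
  rw [show (1 + 1 / (n : ℝ)) / 3 = n * (n + 1) / 3 / n ^ 2 by field_simp,
    sqrt_div' _ (sq_nonneg _), sqrt_sq hn.le]

section Intensity

variable {σ N : ℕ → ℝ} {κ a b : ℝ}

noncomputable def intensityIntegrand (σ N : ℕ → ℝ) (a b : ℝ) (n : ℕ) (w : ℂ) : ℝ :=
  exp (-‖w‖ ^ 2) * (gaussianReal 0 (1 / 2) {x : ℝ | |x| ≤ π * σ n * ‖w‖ / N n}).toReal *
    (gaussianReal 0 (1 / 2) (Icc (a / n) (b / n))).toReal / π

lemma measurable_intensityIntegrand (n : ℕ) : Measurable (intensityIntegrand σ N a b n) := by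
  have hmono : Monotone fun r : ℝ ↦ (gaussianReal 0 (1 / 2) {x : ℝ | |x| ≤ r}).toReal :=
    fun r s hrs ↦ ENNReal.toReal_mono (measure_ne_top _ _) (measure_mono fun x hx ↦ hx.trans hrs)
  exact (((by fun_prop : Measurable fun w : ℂ ↦ exp (-‖w‖ ^ 2)).mul
    (hmono.measurable.comp (by fun_prop))).mul_const _).div_const _

lemma mul_intensityIntegrand_eq {n : ℕ} (hn : (n : ℝ) ≠ 0) (hσ : σ n ≠ 0) (hN : N n ≠ 0)
    (w : ℂ) :
    N n * intensityIntegrand σ N a b n w =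
      exp (-‖w‖ ^ 2) * (π * (σ n / n)) *
        ((gaussianReal 0 (1 / 2) (Icc (-‖w‖ * (π * σ n / N n)) (‖w‖ * (π * σ n / N n)))).toReal
          / (π * σ n / N n)) *
        ((gaussianReal 0 (1 / 2) (Icc (a * (n : ℝ)⁻¹) (b * (n : ℝ)⁻¹))).toReal / (n : ℝ)⁻¹)
        / π := by
  have hset : {x : ℝ | |x| ≤ π * σ n * ‖w‖ / N n} =
      Icc (-‖w‖ * (π * σ n / N n)) (‖w‖ * (π * σ n / N n)) := by
    ext x
    rw [Set.mem_ofPred_eq, abs_le, neg_mul, mem_Icc, mul_div_assoc', mul_comm ‖w‖, mul_comm π]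
  rw [intensityIntegrand, hset, ← div_eq_mul_inv a, ← div_eq_mul_inv b]
  field_simp

lemma norm_mul_intensityIntegrand_le {n : ℕ} (hn : 0 < (n : ℝ)) (hσ : 0 < σ n) (hN : 0 < N n)
    (hab : a ≤ b) (w : ℂ) :
    ‖N n * intensityIntegrand σ N a b n w‖ ≤
      2 * (σ n / n) * (b - a) / π * (exp (-‖w‖ ^ 2) * ‖w‖) := by
  have hv : (1 / 2 : ℝ≥0) ≠ 0 := by norm_num
  have hs : 0 < π * σ n / N n := by positivity
  have hw : -‖w‖ ≤ ‖w‖ := neg_le_self (norm_nonneg w)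
  have hP₁ := gaussianReal_Icc_mul_toReal_div_le (μ := 0) hv hw hs
  have hP₂ := gaussianReal_Icc_mul_toReal_div_le (μ := 0) hv hab (inv_pos.2 hn)
  rw [gaussianPDFReal_zero_half_zero, sub_neg_eq_add] at hP₁
  rw [gaussianPDFReal_zero_half_zero] at hP₂
  rw [mul_intensityIntegrand_eq hn.ne' hσ.ne' hN.ne', norm_of_nonneg (by positivity)]
  calc _ ≤ exp (-‖w‖ ^ 2) * (π * (σ n / n)) * ((‖w‖ + ‖w‖) * (√π)⁻¹) *
        ((b - a) * (√π)⁻¹) / π := by gcongr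
    _ = _ := by
      field_simp
      rw [sq_sqrt pi_pos.le]
      ring

lemma eventually_pos_of_tendsto (hσ : Tendsto (fun n : ℕ ↦ σ n / n) atTop (𝓝 κ)) (hκ : 0 < κ)
    (hN : Tendsto (fun n : ℕ ↦ N n / n) atTop atTop) :
    ∀ᶠ n : ℕ in atTop, 0 < (n : ℝ) ∧ 0 < σ n ∧ 0 < N n := by
  filter_upwards [eventually_gt_atTop 0, hσ.eventually (lt_mem_nhds hκ),
    hN.eventually_gt_atTop 0] with n hn hσn hNn
  have hn : (0 : ℝ) < n := by exact_mod_cast hn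
  exact ⟨hn, (div_pos_iff_of_pos_right hn).1 hσn, (div_pos_iff_of_pos_right hn).1 hNn⟩

lemma tendsto_pi_mul_div_nhdsGT_zero (hσ : Tendsto (fun n : ℕ ↦ σ n / n) atTop (𝓝 κ)) (hκ : 0 < κ)
    (hN : Tendsto (fun n : ℕ ↦ N n / n) atTop atTop) :
    Tendsto (fun n ↦ π * σ n / N n) atTop (𝓝[>] 0) := by
  have hpos := eventually_pos_of_tendsto hσ hκ hN
  refine tendsto_nhdsWithin_iff.2 ⟨((hσ.const_mul π).div_atTop hN).congr' ?_, ?_⟩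
  · filter_upwards [hpos] with n ⟨hn, _, _⟩
    field_simp
  · filter_upwards [hpos] with n ⟨_, hσn, hNn⟩
    exact div_pos (mul_pos pi_pos hσn) hNn

lemma tendsto_mul_intensityIntegrand (hσ : Tendsto (fun n : ℕ ↦ σ n / n) atTop (𝓝 κ))
    (hκ : 0 < κ) (hN : Tendsto (fun n : ℕ ↦ N n / n) atTop atTop) (hab : a ≤ b) (w : ℂ) :
    Tendsto (fun n ↦ N n * intensityIntegrand σ N a b n w) atTop
      (𝓝 (2 * κ * (b - a) / π * (exp (-‖w‖ ^ 2) * ‖w‖))) := by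
  have hv : (1 / 2 : ℝ≥0) ≠ 0 := by norm_num
  have hP₁ := (tendsto_gaussianReal_Icc_mul_div (μ := 0) hv (neg_le_self (norm_nonneg w))).comp
    (tendsto_pi_mul_div_nhdsGT_zero hσ hκ hN)
  have hP₂ := (tendsto_gaussianReal_Icc_mul_div (μ := 0) hv hab).comp
    (tendsto_inv_atTop_nhdsGT_zero.comp tendsto_natCast_atTop_atTop)
  have hlim := (((tendsto_const_nhds (x := exp (-‖w‖ ^ 2))).mul (hσ.const_mul π)).mul hP₁ |>.mul
    hP₂).div_const π
  rw [gaussianPDFReal_zero_half_zero] at hlim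
  convert hlim.congr' ?_ using 2
  · field_simp
    rw [sq_sqrt pi_pos.le]
    ring
  · filter_upwards [eventually_pos_of_tendsto hσ hκ hN] with n ⟨hn, hσn, hNn⟩
    exact (mul_intensityIntegrand_eq hn.ne' hσn.ne' hNn.ne' w).symm

theorem tendsto_mul_integral_intensityIntegrand
    (hσ : Tendsto (fun n : ℕ ↦ σ n / n) atTop (𝓝 κ)) (hκ : 0 < κ)
    (hN : Tendsto (fun n : ℕ ↦ N n / n) atTop atTop) (hab : a ≤ b) :
    Tendsto (fun n ↦ N n * ∫ w, intensityIntegrand σ N a b n w) atTop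
      (𝓝 (κ * √π * (b - a))) := by
  have hbound : ∀ᶠ n : ℕ in atTop, ∀ᵐ w : ℂ, ‖N n * intensityIntegrand σ N a b n w‖ ≤
      2 * (κ + 1) * (b - a) / π * (exp (-‖w‖ ^ 2) * ‖w‖) := by
    filter_upwards [eventually_pos_of_tendsto hσ hκ hN,
      hσ.eventually (gt_mem_nhds (lt_add_one κ))] with n ⟨hn, hσn, hNn⟩ hσκ
    refine ae_of_all _ fun w ↦ (norm_mul_intensityIntegrand_le hn hσn hNn hab w).trans ?_
    gcongr
  have hlim := tendsto_integral_filter_of_dominated_convergence _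
    (Eventually.of_forall fun n ↦
      ((measurable_intensityIntegrand n).const_mul _).aestronglyMeasurable)
    hbound (integrable_exp_neg_norm_sq_mul_norm.const_mul _)
    (ae_of_all _ (tendsto_mul_intensityIntegrand hσ hκ hN hab))
  simp_rw [integral_const_mul, integral_exp_neg_norm_sq_mul_norm] at hlim
  convert hlim using 2
  field_simp

end Intensity

theorem stmt_11_general (ε : ℝ) (hε' : ε < 1/10) (a b : ℝ) (hab : a ≤ b) :
    (fun n : ℕ =>
        (∫ w : ℂ, Real.exp (-‖w‖ ^ 2) *
            ((gaussianReal 0 (1/2)) {x : ℝ | |x| ≤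
                π * Real.sqrt ((n : ℝ) * ((n : ℝ) + 1) / 3) * ‖w‖ /
                  (2 * (⌊(n : ℝ) ^ ((2 : ℝ) - ε) / 2⌋ : ℝ))}).toReal *
            ((gaussianReal 0 (1/2)) (Set.Icc (a / (n : ℝ)) (b / (n : ℝ)))).toReal / π)
          - Real.sqrt (π / 3) * (b - a) / (2 * (⌊(n : ℝ) ^ ((2 : ℝ) - ε) / 2⌋ : ℝ)))
      =o[atTop] fun n : ℕ => 1 / (2 * (⌊(n : ℝ) ^ ((2 : ℝ) - ε) / 2⌋ : ℝ)) := by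
  have hN := tendsto_two_mul_floor_rpow_div_atTop (by linarith : ε < 1)
  have hlim := tendsto_mul_integral_intensityIntegrand tendsto_sqrt_mul_succ_div_three_div
    (by positivity) hN hab
  rw [show (√3)⁻¹ * √π = √(π / 3) by rw [sqrt_div' _ (by norm_num)]; ring] at hlim
  refine isLittleO_sub_div_of_tendsto_mul ?_ hlim
  filter_upwards [hN.eventually_gt_atTop 0] with n hn hN0
  simp [hN0] at hn

/-- The Gaussian computation for the intensity: with `σ_n = √(n(n+1)/3)`,
`N = 2⌊n^{2-ε}/2⌋` and `Z` a standard complex Gaussian,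
`∫_ℂ e^{-|w|²} P(|Re Z| ≤ πσ_n|w|/N) P(Im Z ∈ [a/n, b/n]) dm(w)/π = √(π/3)(b-a)/N + o(1/N)`. -/
theorem stmt_11 (ε : ℝ) (hε : 0 < ε) (hε' : ε < 1/10) (a b : ℝ) (hab : a ≤ b) :
    (fun n : ℕ =>
        (∫ w : ℂ, Real.exp (-‖w‖ ^ 2) *
            ((gaussianReal 0 (1/2)) {x : ℝ | |x| ≤
                π * Real.sqrt ((n : ℝ) * ((n : ℝ) + 1) / 3) * ‖w‖ /
                  (2 * (⌊(n : ℝ) ^ ((2 : ℝ) - ε) / 2⌋ : ℝ))}).toReal *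
            ((gaussianReal 0 (1/2)) (Set.Icc (a / (n : ℝ)) (b / (n : ℝ)))).toReal / π)
          - Real.sqrt (π / 3) * (b - a) / (2 * (⌊(n : ℝ) ^ ((2 : ℝ) - ε) / 2⌋ : ℝ)))
      =o[atTop] fun n : ℕ => 1 / (2 * (⌊(n : ℝ) ^ ((2 : ℝ) - ε) / 2⌋ : ℝ)) :=
  stmt_11_general ε hε' a b hab
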